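/- arXiv:2004.11787 — 3 statements merged into one kernel-verified Lean document; each statement's English description precedes it below -/
import Mathlib

section
/- Let K be a field of characteristic zero and let u, v : ℕ → K be sequences such that u is C-finite of order r and v is C-finite of order s. Then the sequence n ↦ u(n) · v(n) is C-finite of order at most r·s, i.e., it satisfies a C-finite recurrence of some order at most r·s. -/
/-!
The shift `S x n = x (n + 1)` is a `K`-algebra endomorphism of `ℕ → K`. A sequence `x` that is
C-finite of order `r` lies in the span `V x` of `x, S x, …, S^(r-1) x`, and as `c 0 ≠ 0` the
recurrence also writes `x` as a combination of `S x, …, S^r x`, so `V x ⊆ S (V x)`. Since `S` is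
multiplicative, the product `W = V u * V v`, of dimension at most `r * s`, also satisfies
`W ⊆ S W`; comparing dimensions, `S` restricts to an automorphism of `W`, and its
characteristic polynomial (Cayley–Hamilton) is a recurrence for `u * v` of order `dim W` with
nonzero constant term.
-/

/-- A sequence `x : ℕ → K` is C-finite of order `r` if there exist constants
`c 0, …, c (r-1)` with `c 0 ≠ 0` such that
`x (n+r) + c (r-1) * x (n+r-1) + ⋯ + c 0 * x n = 0` for all `n`. -/
def IsCFiniteOfOrder {K : Type*} [Field K] (x : ℕ → K) (r : ℕ) : Prop :=
  ∃ c : ℕ → K, c 0 ≠ 0 ∧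
    ∀ n : ℕ, x (n + r) + ∑ i ∈ Finset.range r, c i * x (n + i) = 0

open Polynomial Module Submodule

theorem Module.End.exists_monic_aeval_eq_zero_of_le_map {K V : Type*} [Field K]
    [AddCommGroup V] [Module K V] (f : Module.End K V) (W : Submodule K V)
    [FiniteDimensional K W] (hW : W ≤ W.map f) {x : V} (hx : x ∈ W) :
    ∃ p : K[X], p.Monic ∧ p.natDegree = finrank K W ∧ p.coeff 0 ≠ 0 ∧
      aeval f p x = 0 := by
  have hmap : W.map f = W := (eq_of_le_of_finrank_le hW (finrank_map_le f W)).symm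
  have hf : ∀ y ∈ W, f y ∈ W := fun y hy => hmap ▸ mem_map_of_mem hy
  set g := f.restrict hf
  have hg : Function.Surjective g := by
    rintro ⟨w, hw⟩
    obtain ⟨y, hy, rfl⟩ := mem_map.1 (hW hw)
    exact ⟨⟨y, hy⟩, rfl⟩
  have hdet : g.det ≠ 0 :=
    ((LinearMap.isUnit_iff_isUnit_det g).1
      ((Module.End.isUnit_iff g).2 ⟨LinearMap.injective_iff_surjective.2 hg, hg⟩)).ne_zero
  refine ⟨g.charpoly, g.charpoly_monic, g.charpoly_natDegree, fun h0 => hdet ?_, ?_⟩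
  · rw [LinearMap.det_eq_sign_charpoly_coeff, h0, mul_zero]
  · have hpow (i : ℕ) : ((g ^ i) ⟨x, hx⟩ : V) = (f ^ i) x := by
      rw [Module.End.pow_restrict]; rfl
    have := congr_arg (fun φ : Module.End K W => (φ ⟨x, hx⟩ : V)) g.aeval_self_charpoly
    simpa [aeval_eq_sum_range, hpow] using this

namespace Submodule

variable {K A : Type*} [Field K] [Ring A] [Algebra K A] (M N : Submodule K A)
  [FiniteDimensional K M] [FiniteDimensional K N]

instance finiteDimensional_mul : FiniteDimensional K ↥(M * N) := by
  rw [← mulMap_range]; infer_instance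

theorem finrank_mul_le : finrank K ↥(M * N) ≤ finrank K M * finrank K N := by
  rw [← mulMap_range, ← finrank_tensorProduct]
  exact LinearMap.finrank_range_le _

end Submodule

section Shift

variable (R : Type*) [CommSemiring R]

def shift : (ℕ → R) →ₐ[R] (ℕ → R) where
  toFun x n := x (n + 1)
  map_one' := rfl
  map_mul' _ _ := rfl
  map_zero' := rfl
  map_add' _ _ := rfl
  commutes' _ := rfl

variable {R}

theorem shift_pow_apply (i : ℕ) (x : ℕ → R) (n : ℕ) :
    ((shift R).toLinearMap ^ i) x n = x (n + i) := by
  induction i generalizing x with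
  | zero => rfl
  | succ i ih => rw [pow_succ, Module.End.mul_apply, ih]; rfl

def shiftSpan (x : ℕ → R) (r : ℕ) : Submodule R (ℕ → R) :=
  span R (Set.range fun i : Fin r => ((shift R).toLinearMap ^ (i : ℕ)) x)

end Shift

section CFinite

variable {K : Type*} [Field K] {x : ℕ → K} {r : ℕ}

instance finiteDimensional_shiftSpan (x : ℕ → K) (r : ℕ) :
    FiniteDimensional K (shiftSpan x r) :=
  FiniteDimensional.span_of_finite K (Set.finite_range _)

theorem finrank_shiftSpan_le (x : ℕ → K) (r : ℕ) : finrank K (shiftSpan x r) ≤ r :=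
  (finrank_range_le_card _).trans_eq (Fintype.card_fin r)

theorem isCFiniteOfOrder_iff_shift : IsCFiniteOfOrder x r ↔ ∃ c : ℕ → K, c 0 ≠ 0 ∧
    ((shift K).toLinearMap ^ r) x +
      ∑ i ∈ Finset.range r, c i • ((shift K).toLinearMap ^ i) x = 0 := by
  simp [IsCFiniteOfOrder, funext_iff, shift_pow_apply]

theorem IsCFiniteOfOrder.of_aeval_shift {p : K[X]} (hp : p.Monic) (h0 : p.coeff 0 ≠ 0)
    (hx : aeval (shift K).toLinearMap p x = 0) : IsCFiniteOfOrder x p.natDegree := by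
  rw [aeval_eq_sum_range, Finset.sum_range_succ, hp.coeff_natDegree, one_smul] at hx
  refine isCFiniteOfOrder_iff_shift.2 ⟨p.coeff, h0, ?_⟩
  simpa [add_comm] using hx

theorem IsCFiniteOfOrder.mem_shiftSpan (hx : IsCFiniteOfOrder x r) : x ∈ shiftSpan x r := by
  rcases Nat.eq_zero_or_pos r with rfl | hr
  · obtain ⟨c, -, h⟩ := isCFiniteOfOrder_iff_shift.1 hx
    simp only [pow_zero, Module.End.one_apply, Finset.range_zero, Finset.sum_empty, add_zero] at h
    exact h ▸ zero_mem _
  · exact subset_span ⟨⟨0, hr⟩, rfl⟩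

theorem IsCFiniteOfOrder.shiftSpan_le_map (hx : IsCFiniteOfOrder x r) :
    shiftSpan x r ≤ (shiftSpan x r).map (shift K).toLinearMap := by
  obtain ⟨c, hc0, hrec⟩ := isCFiniteOfOrder_iff_shift.1 hx
  set S := (shift K).toLinearMap
  have hsucc {i : ℕ} (hi : i < r) : (S ^ (i + 1)) x ∈ (shiftSpan x r).map S := by
    rw [pow_succ', Module.End.mul_apply]
    exact mem_map_of_mem (subset_span ⟨⟨i, hi⟩, rfl⟩)
  refine span_le.2 (Set.range_subset_iff.2 fun ⟨i, hi⟩ => ?_)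
  rcases i with _ | i
  · -- `c 0 ≠ 0` lets the recurrence solve for `x` in terms of `S x, …, S^r x`.
    obtain ⟨k, rfl⟩ := Nat.exists_eq_add_one_of_ne_zero hi.ne'
    rw [Finset.sum_range_succ', pow_zero, Module.End.one_apply, ← add_assoc, add_comm] at hrec
    rw [pow_zero, Module.End.one_apply, SetLike.mem_coe, ← smul_mem_iff _ hc0,
      eq_neg_of_add_eq_zero_left hrec]
    exact neg_mem (add_mem (hsucc (by omega))
      (sum_mem fun i hi => smul_mem _ _ (hsucc (by rw [Finset.mem_range] at hi; omega))))
  · exact hsucc (by omega)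

end CFinite

theorem cfinite_mul_general {K : Type*} [Field K] (u v : ℕ → K) (r s : ℕ)
    (hu : IsCFiniteOfOrder u r) (hv : IsCFiniteOfOrder v s) :
    ∃ t ≤ r * s, IsCFiniteOfOrder (fun n => u n * v n) t := by
  set S := (shift K).toLinearMap
  set W := shiftSpan u r * shiftSpan v s
  have hW : W ≤ W.map S := calc
    W ≤ (shiftSpan u r).map S * (shiftSpan v s).map S :=
      mul_le_mul' hu.shiftSpan_le_map hv.shiftSpan_le_map
    _ = W.map S := (Submodule.map_mul _ _ (shift K)).symm
  obtain ⟨p, hmonic, hdeg, h0, hp⟩ := Module.End.exists_monic_aeval_eq_zero_of_le_map S W hW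
    (mul_mem_mul hu.mem_shiftSpan hv.mem_shiftSpan)
  refine ⟨p.natDegree, ?_, IsCFiniteOfOrder.of_aeval_shift hmonic h0 hp⟩
  calc p.natDegree = finrank K W := hdeg
    _ ≤ finrank K (shiftSpan u r) * finrank K (shiftSpan v s) := finrank_mul_le _ _
    _ ≤ r * s := Nat.mul_le_mul (finrank_shiftSpan_le u r) (finrank_shiftSpan_le v s)

theorem cfinite_mul {K : Type*} [Field K] [CharZero K] (u v : ℕ → K) (r s : ℕ)
    (hu : IsCFiniteOfOrder u r) (hv : IsCFiniteOfOrder v s) :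
    ∃ t ≤ r * s, IsCFiniteOfOrder (fun n => u n * v n) t :=
  cfinite_mul_general u v r s hu hv
end

section
/- Let K be a field of characteristic zero. For i = 0, …, k let q_i : ℕ → K be an exponential sum q_i(n) = u_{i,1}·w_{i,1}^n + ⋯ + u_{i,ℓ_i}·w_{i,ℓ_i}^n, where the u_{i,j} ∈ K are constants and the w_{i,j} ∈ K are nonzero constants. Then q_0(n) + n·q_1(n) + n²·q_2(n) + ⋯ + n^k·q_k(n) = 0 for all n ∈ ℕ if and only if q_i(n) = 0 for all n ∈ ℕ and all i = 0, …, k. -/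
open Polynomial Finset

lemma nd1 {K : Type*} [Field K] : natDegree (X + 1 : K[X]) = 1 := by
  simpa using natDegree_X_add_C (1 : K)

lemma comp_lc {K : Type*} [Field K] (P : K[X]) :
    (P.comp (X + 1)).leadingCoeff = P.leadingCoeff := by
  rw [leadingCoeff_comp (by rw [nd1]; norm_num),
    show (X + 1 : K[X]) = X + C 1 by simp, leadingCoeff_X_add_C, one_pow, mul_one]

lemma comp_natDegree {K : Type*} [Field K] (P : K[X]) :
    (P.comp (X + 1)).natDegree = P.natDegree := by
  rw [natDegree_comp, nd1, mul_one]

lemma comp_ne_zero {K : Type*} [Field K] {P : K[X]} (hP : P ≠ 0) :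
    P.comp (X + 1) ≠ 0 := by
  intro h
  apply hP
  rw [← leadingCoeff_eq_zero, ← comp_lc, h, leadingCoeff_zero]

noncomputable def gOp {K : Type*} [Field K] (a v : K) (P : K[X]) : K[X] :=
  C v * P.comp (X + 1) - C a * P

lemma gOp_eval {K : Type*} [Field K] (a v : K) (P : K[X]) (x : K) :
    (gOp a v P).eval x = v * P.eval (x + 1) - a * P.eval x := by
  simp [gOp, eval_comp]

lemma gOp_ne_zero {K : Type*} [Field K] {a v : K} (hav : a ≠ v) {P : K[X]}
    (hP : P ≠ 0) : gOp a v P ≠ 0 := by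
  intro h
  have hc : (gOp a v P).coeff P.natDegree = (v - a) * P.leadingCoeff := by
    simp only [gOp, coeff_sub, coeff_C_mul]
    have : (P.comp (X + 1)).coeff P.natDegree = P.leadingCoeff := by
      rw [← comp_natDegree P, ← leadingCoeff, comp_lc]
    rw [this, leadingCoeff, sub_mul]
  rw [h, coeff_zero] at hc
  exact (mul_ne_zero (sub_ne_zero.mpr (Ne.symm hav)) (leadingCoeff_ne_zero.mpr hP)) hc.symm

lemma gOp_iter_ne_zero {K : Type*} [Field K] {a v : K} (hav : a ≠ v) {P : K[X]}
    (hP : P ≠ 0) (m : ℕ) : (gOp a v)^[m] P ≠ 0 := by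
  induction m with
  | zero => simpa
  | succ m ih => rw [Function.iterate_succ_apply']; exact gOp_ne_zero hav ih

lemma gOp_zero {K : Type*} [Field K] (a v : K) : gOp a v 0 = 0 := by simp [gOp]

lemma gOp_natDegree_lt {K : Type*} [Field K] (v : K) {P : K[X]} (hP : P ≠ 0)
    (hd : P.natDegree ≠ 0) : (gOp v v P).natDegree < P.natDegree := by
  have hdeg : degree (P.comp (X + 1)) = degree P := by
    rw [degree_eq_natDegree (comp_ne_zero hP), degree_eq_natDegree hP, comp_natDegree]
  have hsub : degree (P.comp (X + 1) - P) < degree P := by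
    rw [← hdeg]; exact degree_sub_lt hdeg (comp_ne_zero hP) (comp_lc P)
  have hmul : gOp v v P = C v * (P.comp (X + 1) - P) := by rw [gOp, mul_sub]
  calc (gOp v v P).natDegree ≤ (P.comp (X + 1) - P).natDegree := by
        rw [hmul]; exact natDegree_C_mul_le _ _
    _ < P.natDegree := by
        by_cases h0 : P.comp (X + 1) - P = 0
        · rw [h0, natDegree_zero]; omega
        · exact natDegree_lt_natDegree h0 hsub

lemma iter_zero_of_le {K : Type*} [Field K] (a v : K) {P : K[X]} {m n : ℕ}
    (h : (gOp a v)^[m] P = 0) (hmn : m ≤ n) : (gOp a v)^[n] P = 0 := by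
  obtain ⟨d, rfl⟩ := Nat.exists_eq_add_of_le hmn
  rw [Nat.add_comm, Function.iterate_add_apply, h]
  exact Function.iterate_fixed (gOp_zero a v) d

lemma gOp_iter_self_aux {K : Type*} [Field K] (v : K) :
    ∀ d (P : K[X]), P.natDegree ≤ d → (gOp v v)^[d + 1] P = 0 := by
  intro d
  induction d using Nat.strong_induction_on with
  | _ d ih =>
    intro P hPd
    by_cases hP : P = 0
    · subst hP; exact Function.iterate_fixed (gOp_zero v v) _
    by_cases hd : P.natDegree = 0
    · have h1 : gOp v v P = 0 := by
        obtain ⟨c, rfl⟩ := natDegree_eq_zero.mp hd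
        simp [gOp]
      rw [Function.iterate_succ_apply, h1]
      exact Function.iterate_fixed (gOp_zero v v) _
    · have hlt := gOp_natDegree_lt v hP hd
      have hd1 : 1 ≤ d := by omega
      rw [Function.iterate_succ_apply]
      exact iter_zero_of_le v v
        (ih (d - 1) (by omega) _ (by omega)) (by omega)

lemma gOp_iter_self {K : Type*} [Field K] (v : K) (P : K[X]) :
    (gOp v v)^[P.natDegree + 1] P = 0 :=
  gOp_iter_self_aux v P.natDegree P le_rfl

lemma key {K : Type*} [Field K] [CharZero K] (s : Finset K)
    (hs : ∀ v ∈ s, v ≠ 0) (P : K → K[X])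
    (h : ∀ n : ℕ, ∑ v ∈ s, (P v).eval (n : K) * v ^ n = 0) :
    ∀ v ∈ s, P v = 0 := by
  classical
  induction s using Finset.induction_on generalizing P with
  | empty => simp
  | @insert w0 t hw0 ih =>
    have hw0ne : w0 ≠ 0 := hs w0 (Finset.mem_insert_self w0 t)
    have h' : ∀ n : ℕ, (P w0).eval (n : K) * w0 ^ n
        + ∑ v ∈ t, (P v).eval (n : K) * v ^ n = 0 := by
      intro n; have := h n; rwa [Finset.sum_insert hw0] at this
    have claim : ∀ M : ℕ, ∀ n : ℕ,
        ((gOp w0 w0)^[M] (P w0)).eval (n : K) * w0 ^ n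
        + ∑ v ∈ t, ((gOp w0 v)^[M] (P v)).eval (n : K) * v ^ n = 0 := by
      intro M
      induction M with
      | zero => simpa using h'
      | succ M ihM =>
        intro n
        have e1 := ihM (n + 1)
        have e2 := ihM n
        simp only [Function.iterate_succ_apply', gOp_eval]
        push_cast at e1 ⊢
        have expand : ∀ v : K, ∀ Q : K[X],
            (v * Q.eval ((n : K) + 1) - w0 * Q.eval (n : K)) * v ^ n
            = Q.eval ((n : K) + 1) * v ^ (n + 1) - w0 * (Q.eval (n : K) * v ^ n) := by
          intro v Q; ring
        rw [expand, Finset.sum_congr rfl (fun v _ => expand v _),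
          Finset.sum_sub_distrib, ← Finset.mul_sum]
        linear_combination e1 - w0 * e2
    -- after enough iterations, the w0 term dies
    set M0 := (P w0).natDegree + 1 with hM0
    have hB : (gOp w0 w0)^[M0] (P w0) = 0 := gOp_iter_self w0 (P w0)
    have ht : ∀ n : ℕ, ∑ v ∈ t, ((gOp w0 v)^[M0] (P v)).eval (n : K) * v ^ n = 0 := by
      intro n
      have := claim M0 n
      rwa [hB, eval_zero, zero_mul, zero_add] at this
    have htz : ∀ v ∈ t, (gOp w0 v)^[M0] (P v) = 0 :=
      ih (fun v hv => hs v (Finset.mem_insert_of_mem hv)) _ ht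
    have hPt : ∀ v ∈ t, P v = 0 := by
      intro v hv
      by_contra hne
      exact gOp_iter_ne_zero (fun hc => hw0 (by rw [hc]; exact hv)) hne M0 (htz v hv)
    -- now the w0 term alone vanishes
    have hw0eval : ∀ n : ℕ, (P w0).eval (n : K) = 0 := by
      intro n
      have := h' n
      rw [Finset.sum_eq_zero (fun v hv => by rw [hPt v hv, eval_zero, zero_mul]),
        add_zero] at this
      exact (mul_eq_zero.mp this).resolve_right (pow_ne_zero n hw0ne)
    have hPw0 : P w0 = 0 := by
      have : Set.Infinite {x : K | (P w0).IsRoot x} := by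
        apply Set.infinite_of_injective_forall_mem (f := fun n : ℕ => (n : K))
          (Nat.cast_injective)
        exact fun n => hw0eval n
      exact eq_zero_of_infinite_isRoot _ this
    intro v hv
    rcases Finset.mem_insert.mp hv with rfl | hv
    · exact hPw0
    · exact hPt v hv

theorem polyWeighted_expSums_zero_iff {K : Type*} [Field K] [CharZero K]
    (k : ℕ) (ℓ : Fin (k + 1) → ℕ)
    (u : (i : Fin (k + 1)) → Fin (ℓ i) → K)
    (w : (i : Fin (k + 1)) → Fin (ℓ i) → K)
    (hw : ∀ i j, w i j ≠ 0) :
    (∀ n : ℕ, ∑ i : Fin (k + 1),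
        (n : K) ^ (i : ℕ) * (∑ j : Fin (ℓ i), u i j * (w i j) ^ n) = 0) ↔
      (∀ (i : Fin (k + 1)) (n : ℕ), ∑ j : Fin (ℓ i), u i j * (w i j) ^ n = 0) := by
  classical
  constructor
  · intro H
    set s : Finset K :=
      Finset.univ.image (fun p : (i : Fin (k + 1)) × Fin (ℓ i) => w p.1 p.2) with hsdef
    have hmem : ∀ i j, w i j ∈ s := fun i j =>
      Finset.mem_image_of_mem _ (Finset.mem_univ (⟨i, j⟩ : (i : Fin (k + 1)) × Fin (ℓ i)))
    set c : Fin (k + 1) → K → K :=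
      fun i v => ∑ j ∈ Finset.univ.filter (fun j => w i j = v), u i j with hcdef
    set P : K → K[X] := fun v => ∑ i : Fin (k + 1), C (c i v) * X ^ (i : ℕ) with hPdef
    have fiber : ∀ (i : Fin (k + 1)) (n : ℕ),
        ∑ v ∈ s, c i v * v ^ n = ∑ j : Fin (ℓ i), u i j * (w i j) ^ n := by
      intro i n
      have step1 : ∑ v ∈ s, c i v * v ^ n
          = ∑ v ∈ s, ∑ j ∈ Finset.univ.filter (fun j => w i j = v),
              u i j * (w i j) ^ n := by
        refine Finset.sum_congr rfl fun v hv => ?_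
        rw [hcdef]
        rw [Finset.sum_mul]
        refine Finset.sum_congr rfl fun j hj => ?_
        rw [(Finset.mem_filter.mp hj).2]
      rw [step1]
      exact Finset.sum_fiberwise_of_maps_to (fun j _ => hmem i j) _
    have hevalP : ∀ (v : K) (x : K), (P v).eval x
        = ∑ i : Fin (k + 1), c i v * x ^ (i : ℕ) := by
      intro v x; simp [hPdef, eval_finset_sum]
    have hmain : ∀ n : ℕ, ∑ v ∈ s, (P v).eval (n : K) * v ^ n = 0 := by
      intro n
      have : ∑ v ∈ s, (P v).eval (n : K) * v ^ n
          = ∑ v ∈ s, ∑ i : Fin (k + 1), c i v * (n : K) ^ (i : ℕ) * v ^ n := by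
        refine Finset.sum_congr rfl fun v hv => ?_
        rw [hevalP, Finset.sum_mul]
      rw [this, Finset.sum_comm]
      have := H n
      rw [← this]
      refine Finset.sum_congr rfl fun i _ => ?_
      rw [← fiber i n, Finset.mul_sum]
      exact Finset.sum_congr rfl fun v _ => by ring
    have hsz : ∀ v ∈ s, v ≠ 0 := by
      intro v hv
      obtain ⟨p, -, rfl⟩ := Finset.mem_image.mp hv
      exact hw p.1 p.2
    have hP0 : ∀ v ∈ s, P v = 0 := key s hsz P hmain
    have hc0 : ∀ (i : Fin (k + 1)), ∀ v ∈ s, c i v = 0 := by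
      intro i v hv
      have hcoeff : (P v).coeff (i : ℕ) = c i v := by
        rw [hPdef]
        simp only [finset_sum_coeff, coeff_C_mul, coeff_X_pow]
        rw [Finset.sum_eq_single i]
        · simp
        · intro b _ hb
          have : ¬((i : ℕ) = (b : ℕ)) := fun hh => hb (Fin.ext hh).symm
          simp [this]
        · intro hi; exact absurd (Finset.mem_univ i) hi
      rw [← hcoeff, hP0 v hv, coeff_zero]
    intro i n
    rw [← fiber i n]
    exact Finset.sum_eq_zero fun v hv => by rw [hc0 i v hv, zero_mul]
  · intro H n
    exact Finset.sum_eq_zero fun i _ => by rw [H i n, mul_zero]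
end

section
/- Let K be a field of characteristic zero and let q : ℕ → K be an exponential sum q(n) = u_1·w_1^n + ⋯ + u_ℓ·w_ℓ^n, where the u_j ∈ K are constants and the w_j ∈ K are nonzero constants. Then q(n) = 0 for all n ∈ ℕ if and only if q(n) = 0 for all n ∈ {0, 1, …, ℓ−1}. -/
theorem expSum_zero_iff_first_values_zero {K : Type*} [Field K] [CharZero K]
    (ℓ : ℕ) (u w : Fin ℓ → K) (hw : ∀ j, w j ≠ 0) :
    (∀ n : ℕ, ∑ j : Fin ℓ, u j * (w j) ^ n = 0) ↔
      ∀ n < ℓ, ∑ j : Fin ℓ, u j * (w j) ^ n = 0 := by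
  constructor
  · intro h n _
    exact h n
  · intro h n
    set p : Polynomial K := ∏ j : Fin ℓ, (Polynomial.X - Polynomial.C (w j)) with hp
    have hmonic : p.Monic :=
      Polynomial.monic_prod_of_monic _ _ fun j _ => Polynomial.monic_X_sub_C _
    have hdeg : p.natDegree = ℓ := by
      rw [hp, Polynomial.natDegree_prod_of_monic _ _ fun j _ => Polynomial.monic_X_sub_C _]
      simp [Polynomial.natDegree_X_sub_C]
    have key : ∀ j : Fin ℓ, (w j) ^ ℓ = -∑ i ∈ Finset.range ℓ, p.coeff i * (w j) ^ i := by
      intro j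
      have h0 : p.eval (w j) = 0 := by
        rw [hp, Polynomial.eval_prod]
        exact Finset.prod_eq_zero (Finset.mem_univ j) (by simp)
      have hc : p.coeff ℓ = 1 := by rw [← hdeg]; exact hmonic.coeff_natDegree
      have he := Polynomial.eval_eq_sum_range (p := p) (w j)
      rw [hdeg, Finset.sum_range_succ, hc, h0] at he
      linear_combination -he
    induction n using Nat.strong_induction_on with
    | _ n ih =>
      rcases lt_or_ge n ℓ with hn | hn
      · exact h n hn
      · obtain ⟨m, rfl⟩ : ∃ m, n = m + ℓ := ⟨n - ℓ, (Nat.sub_add_cancel hn).symm⟩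
        have step : ∀ j : Fin ℓ, u j * w j ^ (m + ℓ) =
            ∑ i ∈ Finset.range ℓ, -(p.coeff i * (u j * w j ^ (m + i))) := by
          intro j
          rw [pow_add, key j, mul_neg, mul_neg, Finset.mul_sum, Finset.mul_sum,
            ← Finset.sum_neg_distrib]
          exact Finset.sum_congr rfl fun i _ => by rw [pow_add]; ring
        calc ∑ j : Fin ℓ, u j * w j ^ (m + ℓ)
            = ∑ j : Fin ℓ, ∑ i ∈ Finset.range ℓ, -(p.coeff i * (u j * w j ^ (m + i))) :=
              Finset.sum_congr rfl fun j _ => step j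
          _ = ∑ i ∈ Finset.range ℓ, -(p.coeff i * ∑ j : Fin ℓ, u j * w j ^ (m + i)) := by
              rw [Finset.sum_comm]
              exact Finset.sum_congr rfl fun i _ => by rw [Finset.mul_sum, Finset.sum_neg_distrib]
          _ = 0 := by
              refine Finset.sum_eq_zero fun i hi => ?_
              rw [ih (m + i) (by have := Finset.mem_range.mp hi; omega), mul_zero, neg_zero]
end
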